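/- Let A be an n×n real PSD matrix and S any n×ℓ real matrix. With C = A S and W = Sᵗ A S, the spectral norm approximation error of the Nyström extension satisfies the exact equality ‖A − C W† Cᵗ‖₂ = ‖(I − P_{A^{1/2} S}) A^{1/2}‖₂². -/

import Mathlib

open Matrix
open scoped Matrix.Norms.L2Operator

open scoped ComplexOrder in
/-- The positive semidefinite square root of a positive semidefinite matrix
(the definition `Matrix.PosSemidef.sqrt` of the older Mathlib, since removed). -/
noncomputable def Matrix.PosSemidef.sqrt {n 𝕜 : Type*} [RCLike 𝕜] [Fintype n] [DecidableEq n]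
    {A : Matrix n n 𝕜} (hA : A.PosSemidef) : Matrix n n 𝕜 :=
  hA.1.eigenvectorUnitary.1 * diagonal ((↑) ∘ (√·) ∘ hA.1.eigenvalues) *
    (star hA.1.eigenvectorUnitary : Matrix n n 𝕜)

open scoped Classical in
/-- Moore–Penrose pseudoinverse, defined via the four Penrose conditions. -/
noncomputable def pinv {m n : Type*} [Fintype m] [Fintype n] (M : Matrix m n ℝ) :
    Matrix n m ℝ :=
  if h : ∃ X : Matrix n m ℝ,
      M * X * M = M ∧ X * M * X = X ∧ (M * X)ᵀ = M * X ∧ (X * M)ᵀ = X * M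
  then h.choose else 0

open scoped Classical in
/-- `eigvalsDesc A i` is the `(i+1)`-st largest eigenvalue of `A` (0-based index `i`);
junk value `0` if `A` is not Hermitian or `i` is out of range. -/
noncomputable def eigvalsDesc {n : ℕ} (A : Matrix (Fin n) (Fin n) ℝ) (i : ℕ) : ℝ :=
  if h : A.IsHermitian ∧ i < n then
    h.1.eigenvalues (Tuple.sort h.1.eigenvalues (Fin.rev ⟨i, h.2⟩))
  else 0

/-- The coherence of an `n × k` matrix: `(n/k)` times the maximal squared row norm. -/
noncomputable def coherence {n k : ℕ} (U : Matrix (Fin n) (Fin k) ℝ) : ℝ :=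
  ((n : ℝ) / k) * ⨆ i : Fin n, ∑ j : Fin k, (U i j) ^ 2

/-- The `n × ℓ` matrix consisting of the first `ℓ` columns of the permutation matrix of `σ`
(column `j` is the standard basis vector `e_{σ j}`). -/
def sampleMatrix {n ℓ : ℕ} (hl : ℓ ≤ n) (σ : Equiv.Perm (Fin n)) :
    Matrix (Fin n) (Fin ℓ) ℝ :=
  Matrix.of fun i j => if σ (Fin.castLE hl j) = i then (1 : ℝ) else 0

/-!
With `B = A^{1/2}` and `M = B S` one has `W = MᵀM` and `C = B M`, so `C W† Cᵀ = B (M W† Mᵀ) B`.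
For every generalized inverse `G` of `MᵀM`, `M G Mᵀ` is the orthogonal projection `P = M M†`
onto the column space of `M`. Hence `A - C W† Cᵀ = B (I - P) B = ((I - P) B)ᵀ ((I - P) B)`,
and the C⋆-identity `‖XᵀX‖ = ‖X‖²` for the spectral norm gives the claim.
-/

section PenroseInverse

variable {m n : Type*} [Fintype m] [Fintype n]

structure IsPenroseInverse (M : Matrix m n ℝ) (X : Matrix n m ℝ) : Prop where
  mul_inv_mul : M * X * M = M
  inv_mul_inv : X * M * X = X
  isSymm_mul_inv : (M * X).IsSymm
  isSymm_inv_mul : (X * M).IsSymm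

lemma exists_isPenroseInverse_of_isSymm [DecidableEq n] {H : Matrix n n ℝ}
    (hH : H.IsSymm) : ∃ X, IsPenroseInverse H X ∧ X.IsSymm := by
  -- `X = f(H)` for `f x = x⁻¹` (so `f 0 = 0`); every `f` is continuous on the finite spectrum.
  have hH' : IsSelfAdjoint H := isHermitian_iff_isSymm.mpr hH
  have hmul (f g : ℝ → ℝ) : cfc f H * cfc g H = cfc (fun x => f x * g x) H :=
    (cfc_mul f g H (H.finite_real_spectrum.continuousOn f)
      (H.finite_real_spectrum.continuousOn g)).symm
  have hsymm (f : ℝ → ℝ) : (cfc f H).IsSymm := isHermitian_iff_isSymm.mp (cfc_predicate f H)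
  have hid : cfc id H = H := cfc_id ℝ H
  set X := cfc (fun x : ℝ => x⁻¹) H
  have hHX : H * X = cfc (fun x : ℝ => x * x⁻¹) H := by rw [← hid, hmul, hid]; rfl
  have hXH : X * H = cfc (fun x : ℝ => x⁻¹ * x) H := by rw [← hid, hmul, hid]; rfl
  refine ⟨X, ⟨?_, ?_, ?_, ?_⟩, hsymm _⟩
  · calc H * X * H = cfc id H * X * cfc id H := by rw [hid]
      _ = H := by rw [hmul, hmul]; simp only [id_eq, mul_inv_mul_cancel]; exact cfc_id' ℝ H
  · have hinv (x : ℝ) : x⁻¹ * x * x⁻¹ = x⁻¹ := by simpa using mul_inv_mul_cancel x⁻¹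
    rw [hXH, hmul]; simp only [hinv]; rfl
  · rw [hHX]; exact hsymm _
  · rw [hXH]; exact hsymm _

lemma mul_mul_transpose_mul_self_eq {M : Matrix m n ℝ} {G : Matrix n n ℝ}
    (hG : Mᵀ * M * G * (Mᵀ * M) = Mᵀ * M) : M * G * (Mᵀ * M) = M := by
  classical
  have h : Mᴴ * M * (G * (Mᵀ * M) - 1) = 0 := by
    rw [conjTranspose_eq_transpose_of_trivial, Matrix.mul_sub, ← Matrix.mul_assoc, hG,
      Matrix.mul_one, sub_self]
  rw [conjTranspose_mul_self_mul_eq_zero, Matrix.mul_sub, Matrix.mul_one, sub_eq_zero] at h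
  rwa [Matrix.mul_assoc]

lemma exists_isPenroseInverse (M : Matrix m n ℝ) : ∃ X, IsPenroseInverse M X := by
  classical
  obtain ⟨G, hG, hGsymm⟩ := exists_isPenroseInverse_of_isSymm (H := Mᵀ * M)
    (by rw [IsSymm, transpose_mul, transpose_transpose])
  have hMG : M * G * (Mᵀ * M) = M := mul_mul_transpose_mul_self_eq hG.mul_inv_mul
  refine ⟨G * Mᵀ, ⟨?_, ?_, ?_, ?_⟩⟩
  · calc M * (G * Mᵀ) * M = M * G * (Mᵀ * M) := by simp only [Matrix.mul_assoc]
      _ = M := hMG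
  · conv_rhs => rw [← hG.inv_mul_inv]
    simp only [Matrix.mul_assoc]
  · rw [IsSymm, transpose_mul, transpose_mul, transpose_transpose, hGsymm.eq, Matrix.mul_assoc]
  · rw [Matrix.mul_assoc]; exact hG.isSymm_inv_mul

lemma isPenroseInverse_pinv (M : Matrix m n ℝ) : IsPenroseInverse M (pinv M) := by
  have h : ∃ X : Matrix n m ℝ,
      M * X * M = M ∧ X * M * X = X ∧ (M * X)ᵀ = M * X ∧ (X * M)ᵀ = X * M :=
    (exists_isPenroseInverse M).imp fun _ hX => ⟨hX.1, hX.2, hX.3, hX.4⟩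
  obtain ⟨h1, h2, h3, h4⟩ := h.choose_spec
  rw [pinv, dif_pos h]
  exact ⟨h1, h2, h3, h4⟩

lemma mul_mul_transpose_eq_mul_pinv {M : Matrix m n ℝ} {G : Matrix n n ℝ}
    (hG : Mᵀ * M * G * (Mᵀ * M) = Mᵀ * M) : M * G * Mᵀ = M * pinv M := by
  obtain ⟨hX, -, hXsymm, -⟩ := isPenroseInverse_pinv M
  calc M * G * Mᵀ = M * G * (M * pinv M * M)ᵀ := by rw [hX]
    _ = M * G * (Mᵀ * M) * pinv M := by
      rw [transpose_mul, hXsymm.eq]; simp only [Matrix.mul_assoc]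
    _ = M * pinv M := by rw [mul_mul_transpose_mul_self_eq hG]

lemma transpose_mul_self_one_sub_mul_pinv [DecidableEq m] (M : Matrix m n ℝ) :
    (1 - M * pinv M)ᵀ * (1 - M * pinv M) = 1 - M * pinv M := by
  obtain ⟨hX, -, hXsymm, -⟩ := isPenroseInverse_pinv M
  have hidem : M * pinv M * (M * pinv M) = M * pinv M := by
    rw [← Matrix.mul_assoc, hX]
  rw [transpose_sub, transpose_one, hXsymm.eq, Matrix.sub_mul, Matrix.one_mul, Matrix.mul_sub,
    Matrix.mul_one, hidem, sub_self, sub_zero]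

end PenroseInverse

namespace Matrix.PosSemidef

open scoped MatrixOrder ComplexOrder

variable {n 𝕜 : Type*} [RCLike 𝕜] [Fintype n] [DecidableEq n] {A : Matrix n n 𝕜}

lemma sqrt_eq_cfcSqrt (hA : A.PosSemidef) : hA.sqrt = CFC.sqrt A := by
  rw [CFC.sqrt_eq_cfc, cfc_nnreal_eq_real _ A hA.nonneg, hA.1.cfc_eq]
  simp only [sqrt, IsHermitian.cfc, Unitary.conjStarAlgAut_apply, Real.sqrt]

lemma sqrt_mul_sqrt (hA : A.PosSemidef) : hA.sqrt * hA.sqrt = A := by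
  rw [sqrt_eq_cfcSqrt]; exact CFC.sqrt_mul_sqrt_self A hA.nonneg

lemma isHermitian_sqrt (hA : A.PosSemidef) : hA.sqrt.IsHermitian := by
  rw [sqrt_eq_cfcSqrt]; exact (CFC.sqrt_nonneg A).isSelfAdjoint

end Matrix.PosSemidef

lemma nystrom_error_eq_transpose_mul_self {n ι : Type*} [Fintype n] [Fintype ι] [DecidableEq n]
    {A B : Matrix n n ℝ}
    (hBB : B * B = A) (hB : B.IsSymm) (S : Matrix n ι ℝ) :
    A - (A * S) * pinv (Sᵀ * A * S) * (A * S)ᵀ =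
      ((1 - B * S * pinv (B * S)) * B)ᵀ * ((1 - B * S * pinv (B * S)) * B) := by
  subst hBB
  set M := B * S
  have hW : Sᵀ * (B * B) * S = Mᵀ * M := by
    simp only [M, transpose_mul, hB.eq, Matrix.mul_assoc]
  have hQ : M * pinv (Mᵀ * M) * Mᵀ = M * pinv M :=
    mul_mul_transpose_eq_mul_pinv (isPenroseInverse_pinv _).mul_inv_mul
  calc B * B - B * B * S * pinv (Sᵀ * (B * B) * S) * (B * B * S)ᵀ
      = B * B - B * (M * pinv (Mᵀ * M) * Mᵀ) * B := by
        rw [hW]; simp only [M, transpose_mul, hB.eq, Matrix.mul_assoc]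
    _ = B * ((1 - M * pinv M)ᵀ * (1 - M * pinv M)) * B := by
        rw [hQ, transpose_mul_self_one_sub_mul_pinv, Matrix.mul_sub, Matrix.sub_mul, Matrix.mul_one]
    _ = ((1 - M * pinv M) * B)ᵀ * ((1 - M * pinv M) * B) := by
        rw [transpose_mul, hB.eq]; simp only [Matrix.mul_assoc]

/-- For a PSD matrix `A` and any sampling matrix `S`, with `C = A S` and
`W = Sᵗ A S`, the spectral norm error of the Nyström extension satisfies
`‖A − C W† Cᵗ‖₂ = ‖(I − P_{A^{1/2} S}) A^{1/2}‖₂²`. -/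
theorem nystrom_spectral_error_eq {n ℓ : ℕ}
    (A : Matrix (Fin n) (Fin n) ℝ) (hA : A.PosSemidef)
    (S : Matrix (Fin n) (Fin ℓ) ℝ)
    (C : Matrix (Fin n) (Fin ℓ) ℝ) (W : Matrix (Fin ℓ) (Fin ℓ) ℝ)
    (hC : C = A * S) (hW : W = Sᵀ * A * S) :
    ‖A - C * pinv W * Cᵀ‖ =
      ‖((1 : Matrix (Fin n) (Fin n) ℝ) - (hA.sqrt * S) * pinv (hA.sqrt * S)) * hA.sqrt‖ ^ 2 := by
  have hB : hA.sqrt.IsSymm := isHermitian_iff_isSymm.mp hA.isHermitian_sqrt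
  rw [hC, hW, nystrom_error_eq_transpose_mul_self hA.sqrt_mul_sqrt hB S,
    ← conjTranspose_eq_transpose_of_trivial, l2_opNorm_conjTranspose_mul_self, sq]
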